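/- Let B ⊂ ℝ^d be bounded and suppose there exist positive constants R, L, H such that for each x ∈ B, all u,v,w ∈ B_R(x) and h ∈ [0,H), f̃ satisfies f̃(x,x,0) = f(x), |f̃(u,v,h) − f̃(w,v,h)| ≤ L|u−w|, |f̃(u,v,h) − f̃(u,w,h)| ≤ L|v−w|, and |f̃(x,x,h) − f̃(x,x,0)| ≤ Lh|i(x)|. Let R' := max{R, 10L} and H' := min{H, 1/(10L), 1/(6C₂R'), 1/((36C₂+6)L)}. Then for each fixed x ∈ B and h ∈ [0,H') there exists a unique y ∈ B_{6R'}(x) such that y = x + h f̃(x,y,h). -/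

import Mathlib

/-!
On the closed ball `B_{6R'}(x)`, which lies inside `B_R(x)`, consistency and the Lipschitz
bounds give `‖f̃(x,y,h)‖ ≤ C₂ ‖i x‖`, so for `h ≤ 1/(6 C₂ R')` the map `y ↦ x + h f̃(x,y,h)`
sends the ball into itself; it is `h L`-Lipschitz there with `h L ≤ 1/10`. The Banach fixed
point theorem on this complete set gives the unique solution.
-/

open scoped RealInnerProductSpace

noncomputable section

/-- Membership in the ball `B_R(x) = {z : ‖z − x‖ ≤ ‖i x‖ / R}`. -/
def InBall {d : ℕ} (i : EuclideanSpace ℝ (Fin d) → EuclideanSpace ℝ (Fin d)) (R : ℝ)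
    (x z : EuclideanSpace ℝ (Fin d)) : Prop :=
  ‖z - x‖ ≤ ‖i x‖ / R

/-- The consistency and local Lipschitz conditions at the point `x` for an approximation
`g(·,·,·)` of `target` (conditions (11z)/(12z) of the paper, with balls measured via `i`). -/
def ConsistAt {d : ℕ} (i target : EuclideanSpace ℝ (Fin d) → EuclideanSpace ℝ (Fin d))
    (x : EuclideanSpace ℝ (Fin d)) (R L H : ℝ)
    (g : EuclideanSpace ℝ (Fin d) → EuclideanSpace ℝ (Fin d) → ℝ → EuclideanSpace ℝ (Fin d)) :
    Prop :=
  g x x 0 = target x ∧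
    ∀ h : ℝ, 0 ≤ h → h < H →
      (∀ u v w, InBall i R x u → InBall i R x v → InBall i R x w →
        ‖g u v h - g w v h‖ ≤ L * ‖u - w‖ ∧ ‖g u v h - g u w h‖ ≤ L * ‖v - w‖) ∧
      ‖g x x h - g x x 0‖ ≤ L * h * ‖i x‖

/-- The discrete gradient step equation `x' = x + h S̃(x,x',h) ī(x,x')`, where
`S̃ = (f̃ ĩᵀ − ĩ f̃ᵀ)/(î·ĭ)`, so that
`S̃ ī = ((ĩ·ī) f̃ − (f̃·ī) ĩ)/(î·ĭ)`. -/
def DGEq {d : ℕ}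
    (ftil itil ihat ibrev :
      EuclideanSpace ℝ (Fin d) → EuclideanSpace ℝ (Fin d) → ℝ → EuclideanSpace ℝ (Fin d))
    (ibar : EuclideanSpace ℝ (Fin d) → EuclideanSpace ℝ (Fin d) → EuclideanSpace ℝ (Fin d))
    (x : EuclideanSpace ℝ (Fin d)) (h : ℝ) (x' : EuclideanSpace ℝ (Fin d)) : Prop :=
  x' = x + (h / ⟪ihat x x' h, ibrev x x' h⟫) •
    (⟪itil x x' h, ibar x x'⟫ • ftil x x' h - ⟪ftil x x' h, ibar x x'⟫ • itil x x' h)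

open Set Metric Function
open scoped NNReal

theorem LipschitzOnWith.existsUnique_isFixedPt {α : Type*} [MetricSpace α] {s : Set α}
    (hsc : IsComplete s) (hs : s.Nonempty) {T : α → α} (hTs : MapsTo T s s) {K : ℝ≥0}
    (hK : K < 1) (hT : LipschitzOnWith K T s) : ∃! y, y ∈ s ∧ IsFixedPt T y := by
  obtain ⟨x, hx⟩ := hs
  obtain ⟨y, hys, hy, -⟩ := ContractingWith.exists_fixedPoint' hsc hTs
    ⟨hK, hT.mapsToRestrict hTs⟩ hx (edist_ne_top _ _)
  refine ⟨y, ⟨hys, hy⟩, fun z ⟨hzs, hz⟩ => ?_⟩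
  have hle : dist z y ≤ K * dist z y := by
    simpa only [hz.eq, hy.eq] using hT.dist_le_mul z hzs y hys
  have hK' : (K : ℝ) < 1 := hK
  exact dist_le_zero.1 (by nlinarith [dist_nonneg (x := z) (y := y)])

section Consistency

variable {d : ℕ} {i f : EuclideanSpace ℝ (Fin d) → EuclideanSpace ℝ (Fin d)}
  {ftil : EuclideanSpace ℝ (Fin d) → EuclideanSpace ℝ (Fin d) → ℝ → EuclideanSpace ℝ (Fin d)}
  {x y z : EuclideanSpace ℝ (Fin d)} {R L H h : ℝ}

theorem setOf_inBall : {z | InBall i R x z} = closedBall x (‖i x‖ / R) := by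
  ext z
  rw [mem_ofPred_eq, mem_closedBall, dist_eq_norm, InBall]

theorem InBall.mono {R' : ℝ} (hz : InBall i R' x z) (hR : 0 < R) (hRR' : R ≤ R') :
    InBall i R x z :=
  hz.trans (div_le_div_of_nonneg_left (norm_nonneg _) hR hRR')

theorem InBall.self (hz : InBall i R x z) : InBall i R x x := by
  simpa [InBall] using (norm_nonneg _).trans hz

theorem ConsistAt.dist_apply_le (hc : ConsistAt i f x R L H ftil) (h0 : 0 ≤ h) (hhH : h < H)
    (hy : InBall i R x y) (hz : InBall i R x z) :
    dist (ftil x y h) (ftil x z h) ≤ L * dist y z := by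
  rw [dist_eq_norm, dist_eq_norm]
  exact ((hc.2 h h0 hhH).1 x y z hy.self hy hz).2

theorem ConsistAt.norm_apply_le (hc : ConsistAt i f x R L H ftil) (h0 : 0 ≤ h) (hhH : h < H)
    (hy : InBall i R x y) :
    ‖ftil x y h‖ ≤ ‖f x‖ + L * h * ‖i x‖ + L * ‖y - x‖ := by
  have hLip : ‖ftil x y h - ftil x x h‖ ≤ L * ‖y - x‖ := by
    simpa only [dist_eq_norm] using hc.dist_apply_le h0 hhH hy hy.self
  calc ‖ftil x y h‖
      = ‖ftil x x 0 + (ftil x x h - ftil x x 0) + (ftil x y h - ftil x x h)‖ := by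
        congr 1; abel
    _ ≤ ‖ftil x x 0‖ + ‖ftil x x h - ftil x x 0‖ + ‖ftil x y h - ftil x x h‖ := norm_add₃_le
    _ ≤ ‖f x‖ + L * h * ‖i x‖ + L * ‖y - x‖ := by
        rw [← hc.1]; gcongr; exact (hc.2 h h0 hhH).2

-- The slack `1/5 > 1/10 + 1/60` absorbs the consistency error `L h ‖i x‖` and the
-- Lipschitz error `L ‖y - x‖` on `B_{6R'}(x)`.
theorem ConsistAt.norm_apply_le_mul {C₁ R' : ℝ} (hc : ConsistAt i f x R L H ftil)
    (hfx : ‖f x‖ ≤ C₁ * ‖i x‖) (hR : 0 < R) (hL : 0 ≤ L) (hRR' : R ≤ R') (hLR' : 10 * L ≤ R')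
    (h0 : 0 ≤ h) (hhH : h < H) (hhL : h * (10 * L) ≤ 1) (hy : InBall i (6 * R') x y) :
    ‖ftil x y h‖ ≤ (C₁ + 1 / 5) * ‖i x‖ := by
  have hR' : 0 < R' := hR.trans_le hRR'
  have hN := norm_nonneg (i x)
  have hstep : L * h * ‖i x‖ ≤ ‖i x‖ / 10 := by nlinarith
  have hdist : L * ‖y - x‖ ≤ ‖i x‖ / 60 := by
    calc L * ‖y - x‖ ≤ L * (‖i x‖ / (6 * R')) := mul_le_mul_of_nonneg_left hy hL
      _ ≤ ‖i x‖ / 60 := by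
        rw [mul_div_assoc', div_le_div_iff₀ (by positivity) (by norm_num)]
        nlinarith
  have := hc.norm_apply_le h0 hhH (hy.mono hR (by linarith))
  linarith

theorem ConsistAt.mapsTo_step {C₁ R' : ℝ} (hc : ConsistAt i f x R L H ftil)
    (hfx : ‖f x‖ ≤ C₁ * ‖i x‖) (hR : 0 < R) (hL : 0 ≤ L) (hRR' : R ≤ R') (hLR' : 10 * L ≤ R')
    (h0 : 0 ≤ h) (hhH : h < H) (hhL : h * (10 * L) ≤ 1) (hhC : h * (6 * (C₁ + 1 / 5) * R') ≤ 1) :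
    MapsTo (fun y => x + h • ftil x y h) {y | InBall i (6 * R') x y}
      {y | InBall i (6 * R') x y} := by
  intro y hy
  have hR' : 0 < R' := hR.trans_le hRR'
  show ‖x + h • ftil x y h - x‖ ≤ ‖i x‖ / (6 * R')
  rw [add_sub_cancel_left, norm_smul, Real.norm_of_nonneg h0, le_div_iff₀ (by positivity)]
  calc h * ‖ftil x y h‖ * (6 * R') ≤ h * ((C₁ + 1 / 5) * ‖i x‖) * (6 * R') := by
        gcongr; exact hc.norm_apply_le_mul hfx hR hL hRR' hLR' h0 hhH hhL hy
    _ = h * (6 * (C₁ + 1 / 5) * R') * ‖i x‖ := by ring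
    _ ≤ ‖i x‖ := mul_le_of_le_one_left (norm_nonneg _) hhC

theorem ConsistAt.lipschitzOnWith_step (hc : ConsistAt i f x R L H ftil) (h0 : 0 ≤ h)
    (hhH : h < H) : LipschitzOnWith (Real.toNNReal (h * L)) (fun y => x + h • ftil x y h)
      {y | InBall i R x y} :=
  LipschitzOnWith.of_dist_le' fun y hy z hz =>
    calc dist (x + h • ftil x y h) (x + h • ftil x z h) = h * dist (ftil x y h) (ftil x z h) := by
          rw [dist_add_left, dist_smul₀, Real.norm_of_nonneg h0]
      _ ≤ h * (L * dist y z) := by gcongr; exact hc.dist_apply_le h0 hhH hy hz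
      _ = h * L * dist y z := by ring

theorem ConsistAt.existsUnique_step {C₁ R' : ℝ} (hc : ConsistAt i f x R L H ftil)
    (hfx : ‖f x‖ ≤ C₁ * ‖i x‖) (hR : 0 < R) (hL : 0 ≤ L) (hRR' : R ≤ R') (hLR' : 10 * L ≤ R')
    (h0 : 0 ≤ h) (hhH : h < H) (hhL : h * (10 * L) ≤ 1) (hhC : h * (6 * (C₁ + 1 / 5) * R') ≤ 1) :
    ∃! y, InBall i (6 * R') x y ∧ y = x + h • ftil x y h := by
  have hR' : 0 < R' := hR.trans_le hRR'
  have hmaps := hc.mapsTo_step hfx hR hL hRR' hLR' h0 hhH hhL hhC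
  have hsub : {y | InBall i (6 * R') x y} ⊆ {y | InBall i R x y} :=
    fun y hy => InBall.mono hy hR (by linarith)
  have hlip := (hc.lipschitzOnWith_step h0 hhH).mono hsub
  rw [setOf_inBall] at hmaps hlip
  have := hlip.existsUnique_isFixedPt isClosed_closedBall.isComplete
    (nonempty_closedBall.2 (by positivity)) hmaps (Real.toNNReal_lt_one.2 (by linarith))
  simpa only [← setOf_inBall, mem_ofPred_eq, IsFixedPt, eq_comm] using this

end Consistency

theorem underlying_method_exists_unique_general {d : ℕ}
    (f : EuclideanSpace ℝ (Fin d) → EuclideanSpace ℝ (Fin d))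
    (i : EuclideanSpace ℝ (Fin d) → EuclideanSpace ℝ (Fin d))
    (B : Set (EuclideanSpace ℝ (Fin d)))
    (C₁ : ℝ) (hC₁ : 0 < C₁) (hfC : ∀ x ∈ B, ‖f x‖ ≤ C₁ * ‖i x‖)
    (R L H : ℝ) (hR : 0 < R) (hL : 0 < L)
    (ftil : EuclideanSpace ℝ (Fin d) → EuclideanSpace ℝ (Fin d) → ℝ → EuclideanSpace ℝ (Fin d))
    (hftil : ∀ x ∈ B, ConsistAt i f x R L H ftil)
    (R' H' : ℝ) (hR' : R' = max R (10 * L))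
    (hH' : H' = min H (min (1 / (10 * L))
      (min (1 / (6 * (C₁ + 1/5) * R')) (1 / ((36 * (C₁ + 1/5) + 6) * L))))) :
    ∀ x ∈ B, ∀ h : ℝ, 0 ≤ h → h < H' →
      ∃! y : EuclideanSpace ℝ (Fin d), InBall i (6 * R') x y ∧ y = x + h • ftil x y h := by
  intro x hx h h0 hhH'
  have hRR' : R ≤ R' := hR' ▸ le_max_left _ _
  have hLR' : 10 * L ≤ R' := hR' ▸ le_max_right _ _
  have hR'0 : 0 < R' := hR.trans_le hRR'
  obtain ⟨hhH, hhL, hhC, -⟩ : h < H ∧ h < 1 / (10 * L) ∧ h < 1 / (6 * (C₁ + 1/5) * R') ∧ _ := by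
    simpa only [hH', lt_min_iff] using hhH'
  rw [lt_div_iff₀ (by positivity)] at hhL hhC
  exact (hftil x hx).existsUnique_step (hfC x hx) hR hL.le hRR' hLR' h0 hhH hhL.le hhC.le

/-- Lemma: existence and uniqueness for `y = x + h f̃(x,y,h)`. -/
theorem underlying_method_exists_unique {d : ℕ}
    (f : EuclideanSpace ℝ (Fin d) → EuclideanSpace ℝ (Fin d))
    (I : EuclideanSpace ℝ (Fin d) → ℝ)
    (i : EuclideanSpace ℝ (Fin d) → EuclideanSpace ℝ (Fin d))
    (hgrad : ∀ x, HasGradientAt I (i x) x)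
    (B : Set (EuclideanSpace ℝ (Fin d))) (hB : Bornology.IsBounded B)
    (C₁ : ℝ) (hC₁ : 0 < C₁) (hfC : ∀ x ∈ B, ‖f x‖ ≤ C₁ * ‖i x‖)
    (R L H : ℝ) (hR : 0 < R) (hL : 0 < L) (hH : 0 < H)
    (ftil : EuclideanSpace ℝ (Fin d) → EuclideanSpace ℝ (Fin d) → ℝ → EuclideanSpace ℝ (Fin d))
    (hftil : ∀ x ∈ B, ConsistAt i f x R L H ftil)
    (R' H' : ℝ) (hR' : R' = max R (10 * L))
    (hH' : H' = min H (min (1 / (10 * L))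
      (min (1 / (6 * (C₁ + 1/5) * R')) (1 / ((36 * (C₁ + 1/5) + 6) * L))))) :
    ∀ x ∈ B, ∀ h : ℝ, 0 ≤ h → h < H' →
      ∃! y : EuclideanSpace ℝ (Fin d), InBall i (6 * R') x y ∧ y = x + h • ftil x y h :=
  underlying_method_exists_unique_general f i B C₁ hC₁ hfC R L H hR hL ftil hftil R' H' hR' hH'
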